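/- Let H be a Hilbert space and V a bounded operator on H. Suppose there exist Hilbert spaces G₁, G₂, bounded operators P : H → G₁ and Q : H → G₂ with Q compact, and a constant C such that |⟨f, V g⟩| ≤ C ‖P f‖ · ‖Q g‖ for all f, g ∈ H, and moreover P ∘ V is bounded. Then V is compact. -/

import Mathlib

/-!
Testing the form bound against `f = V g` gives `‖V g‖² ≤ C ‖P‖ ‖V g‖ ‖Q g‖`, hence
`‖V g‖ ≤ C⁺ ‖P‖ ‖Q g‖`. So `V` is Lipschitz for the seminorm `‖Q ·‖`, and the image of the unit
ball under `V` is totally bounded because its image under the compact operator `Q` is.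
-/
open Metric Set

theorem TotallyBounded.image_of_dist_le_mul {α β γ : Type*} [PseudoMetricSpace β]
    [PseudoMetricSpace γ] {f : α → β} {g : α → γ} {s : Set α} {K : ℝ}
    (hs : TotallyBounded (g '' s))
    (hfg : ∀ x ∈ s, ∀ y ∈ s, dist (f x) (f y) ≤ K * dist (g x) (g y)) :
    TotallyBounded (f '' s) := by
  rw [totallyBounded_iff]
  intro ε hε
  have hδ : 0 < ε / (|K| + 1) := by positivity
  obtain ⟨t, hts, htfin, hcover⟩ := exists_subset_image_finite_and.1
    (finite_approx_of_totallyBounded hs _ hδ)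
  refine ⟨f '' t, htfin.image f, ?_⟩
  rintro _ ⟨x, hx, rfl⟩
  obtain ⟨y, hyt, hxy⟩ : ∃ y ∈ t, dist (g x) (g y) < ε / (|K| + 1) := by
    simpa [biUnion_image] using hcover (mem_image_of_mem g hx)
  refine mem_biUnion (mem_image_of_mem f hyt) (mem_ball.2 ?_)
  calc dist (f x) (f y) ≤ K * dist (g x) (g y) := hfg x hx y (hts hyt)
    _ ≤ |K| * (ε / (|K| + 1)) := by gcongr; exact le_abs_self K
    _ < ε := by
      rw [mul_div_assoc', div_lt_iff₀ (by positivity)]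
      nlinarith

theorem IsCompactOperator.of_norm_le_mul_norm {𝕜 E F G : Type*} [NontriviallyNormedField 𝕜]
    [SeminormedAddCommGroup E] [NormedSpace 𝕜 E] [NormedAddCommGroup F] [NormedSpace 𝕜 F]
    [CompleteSpace F] [SeminormedAddCommGroup G] [NormedSpace 𝕜 G]
    {V : E →ₗ[𝕜] F} {Q : E →ₗ[𝕜] G} (hQ : IsCompactOperator Q) (K : ℝ)
    (hVQ : ∀ x, ‖V x‖ ≤ K * ‖Q x‖) : IsCompactOperator V := by
  rw [isCompactOperator_iff_exists_mem_nhds_isCompact_closure_image]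
  refine ⟨closedBall 0 1, closedBall_mem_nhds _ one_pos, ?_⟩
  obtain ⟨L, hL, hQL⟩ := hQ.image_closedBall_subset_compact 1
  have hQB : TotallyBounded (Q '' closedBall 0 1) := hL.totallyBounded.subset hQL
  refine (hQB.image_of_dist_le_mul (K := K) fun x _ y _ ↦ ?_).closure.isCompact_of_isClosed
    isClosed_closure
  simpa only [dist_eq_norm, ← map_sub] using hVQ (x - y)

theorem norm_le_of_norm_inner_le {𝕜 E F G : Type*} [RCLike 𝕜] [SeminormedAddCommGroup E]
    [InnerProductSpace 𝕜 E] [SeminormedAddCommGroup F] [NormedSpace 𝕜 F]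
    [SeminormedAddCommGroup G] {V : E → E} (P : E →L[𝕜] F) {Q : E → G} {C : ℝ}
    (hVPQ : ∀ f g, ‖(inner 𝕜 f (V g) : 𝕜)‖ ≤ C * ‖P f‖ * ‖Q g‖) (g : E) :
    ‖V g‖ ≤ max C 0 * ‖P‖ * ‖Q g‖ := by
  have h : ‖V g‖ * ‖V g‖ ≤ max C 0 * ‖P‖ * ‖Q g‖ * ‖V g‖ :=
    calc ‖V g‖ * ‖V g‖ = ‖(inner 𝕜 (V g) (V g) : 𝕜)‖ := by
          rw [← inner_self_re_eq_norm, inner_self_eq_norm_mul_norm]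
      _ ≤ C * ‖P (V g)‖ * ‖Q g‖ := hVPQ (V g) g
      _ ≤ max C 0 * (‖P‖ * ‖V g‖) * ‖Q g‖ := by gcongr; exacts [le_max_left _ _, P.le_opNorm _]
      _ = max C 0 * ‖P‖ * ‖Q g‖ * ‖V g‖ := by ring
  rcases (norm_nonneg (V g)).eq_or_lt with h0 | h0
  · rw [← h0]; positivity
  · exact le_of_mul_le_mul_right h h0

variable {H G₁ G₂ : Type*} [NormedAddCommGroup H] [InnerProductSpace ℂ H] [CompleteSpace H]
  [NormedAddCommGroup G₁] [InnerProductSpace ℂ G₁] [CompleteSpace G₁]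
  [NormedAddCommGroup G₂] [InnerProductSpace ℂ G₂] [CompleteSpace G₂]

theorem compact_of_form_bound_general (V : H →L[ℂ] H) (P : H →L[ℂ] G₁) (Q : H →L[ℂ] G₂)
    (hQ : IsCompactOperator Q) (C : ℝ)
    (hbound : ∀ f g : H, ‖(inner (𝕜 := ℂ) f (V g) : ℂ)‖ ≤ C * ‖P f‖ * ‖Q g‖) :
    IsCompactOperator V :=
  IsCompactOperator.of_norm_le_mul_norm (V := (V : H →ₗ[ℂ] H)) (Q := (Q : H →ₗ[ℂ] G₂)) hQ _
    (norm_le_of_norm_inner_le P hbound)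

/-- If the bilinear form of `V` is controlled as `|⟨f, Vg⟩| ≤ C ‖P f‖ ‖Q g‖` with `P` bounded,
`Q` compact and `P ∘ V` bounded, then `V` is compact. -/
theorem compact_of_form_bound (V : H →L[ℂ] H) (P : H →L[ℂ] G₁) (Q : H →L[ℂ] G₂)
    (hQ : IsCompactOperator Q) (C : ℝ)
    (hbound : ∀ f g : H, ‖(inner (𝕜 := ℂ) f (V g) : ℂ)‖ ≤ C * ‖P f‖ * ‖Q g‖)
    (PV : H →L[ℂ] G₁) (hPV : ∀ x, PV x = P (V x)) :
    IsCompactOperator V :=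
  compact_of_form_bound_general V P Q hQ C hbound
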